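/- For the genus 1 derivations 𝓛₁ = x₃ ∂/∂x₂ + x₄ ∂/∂x₃ + 12x₂x₃ ∂/∂x₄ and 𝓛₂ = ((2/3)x₄ - 2x₂²) ∂/∂x₂ + 3x₂x₃ ∂/∂x₃ + (2x₂x₄ + 3x₃²) ∂/∂x₄ on ℂ[x₂, x₃, x₄], the commutator satisfies [𝓛₁, 𝓛₂] = x₂ · 𝓛₁. -/
import Mathlib


open MvPolynomial

noncomputable abbrev x2 : MvPolynomial (Fin 3) ℂ := X 0
noncomputable abbrev x3 : MvPolynomial (Fin 3) ℂ := X 1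
noncomputable abbrev x4 : MvPolynomial (Fin 3) ℂ := X 2

/-- `𝓛₁ = x₃ ∂/∂x₂ + x₄ ∂/∂x₃ + 12x₂x₃ ∂/∂x₄`. -/
noncomputable def L1 : Derivation ℂ (MvPolynomial (Fin 3) ℂ) (MvPolynomial (Fin 3) ℂ) :=
  mkDerivation ℂ ![x3, x4, 12 * x2 * x3]

/-- `𝓛₂ = ((2/3)x₄ - 2x₂²) ∂/∂x₂ + 3x₂x₃ ∂/∂x₃ + (2x₂x₄ + 3x₃²) ∂/∂x₄`. -/
noncomputable def L2 : Derivation ℂ (MvPolynomial (Fin 3) ℂ) (MvPolynomial (Fin 3) ℂ) :=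
  mkDerivation ℂ ![(2 / 3 : ℂ) • x4 - 2 * x2 ^ 2, 3 * x2 * x3, 2 * x2 * x4 + 3 * x3 ^ 2]

lemma D_two (D : Derivation ℂ (MvPolynomial (Fin 3) ℂ) (MvPolynomial (Fin 3) ℂ)) :
    D 2 = 0 := by have := D.map_natCast 2; norm_num at this; exact this

lemma D_three (D : Derivation ℂ (MvPolynomial (Fin 3) ℂ) (MvPolynomial (Fin 3) ℂ)) :
    D 3 = 0 := by have := D.map_natCast 3; norm_num at this; exact this

lemma D_twelve (D : Derivation ℂ (MvPolynomial (Fin 3) ℂ) (MvPolynomial (Fin 3) ℂ)) :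
    D 12 = 0 := by have := D.map_natCast 12; norm_num at this; exact this

lemma hC : (C (2 / 3 : ℂ) : MvPolynomial (Fin 3) ℂ) * 12 = 8 := by
  rw [show (12 : MvPolynomial (Fin 3) ℂ) = C 12 from (map_ofNat C 12).symm,
    show (8 : MvPolynomial (Fin 3) ℂ) = C 8 from (map_ofNat C 8).symm, ← C_mul]
  norm_num

/-- `[𝓛₁, 𝓛₂] = x₂ · 𝓛₁`. -/
theorem commutator_L1_L2 : ⁅L1, L2⁆ = x2 • L1 := by
  apply MvPolynomial.derivation_ext
  intro i
  fin_cases i <;>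
    simp [L1, L2, Derivation.commutator_apply, mkDerivation_X, smul_sub,
      D_two, D_three, D_twelve, smul_eq_C_mul]
  · linear_combination (x2 * x3) * hC
  · ring
  · linear_combination (-(x3 * x4)) * hC
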